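/- Suppose Φ_1, …, Φ_k and S_1, …, S_k satisfy the (r = 2) subspace conditions, let n be an integer with 2n ≤ k, and assume S_{2j−1} ∩ S_{2j} = {0} for each j in {1,…,n}. Let Ω_1, …, Ω_m be linearly independent linear endomorphisms of V such that Ω_i(S_j) = S_j for all i in {1,…,m} and all j in {1,…,2n}. For i ∈ {1,…,m} and ε = (ε_1,…,ε_n) ∈ {0,1}^n, let Υ^i_ε be the composition applying Ω_i first and then, over j = 1,…,n in increasing order, the maps (Φ_{2j−1} followed by Φ_{2j}) for those j with ε_j = 1 (the paper's product Ω_i·∏_{j=1}^n (Φ_{2j−1}Φ_{2j})^{ε_j}). Then the m·2^n endomorphisms {Υ^i_ε : i ∈ {1,…,m}, ε ∈ {0,1}^n} are linearly independent over F. -/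

import Mathlib

/-!
Write `ψ_j = Φ_{2j+1} ∘ Φ_{2j}` (indices from 0) and let `T = S_{2n}`, `U = S_{2n+1}` be the last
pair. Grouping a vanishing combination `∑_ε ψ^ε A_ε` (each `A_ε` a combination of the `Ω_i`) by
`ε_n` gives `ψ_n B₁ + B₀ = 0`, where `B₀, B₁` preserve `T` and `U` because the `A_ε` and the
earlier `ψ_j` do. For `x ∈ T`, `ψ_n (B₁ x) = -B₀ x ∈ T` and `Φ_{2n+1}` fixes `T`, so
`Φ_{2n} (B₁ x) ∈ Φ_{2n}(T) ∩ T = 0`; symmetrically on `U`. As `V = T ⊕ U` by dimension count,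
`B₁ = 0`, hence `B₀ = 0`, and induction on `n` leaves the independence of the `Ω_i`.
-/

def selectedProd {M : Type*} [Monoid M] {n : ℕ} (f : Fin n → M) (ε : Fin n → Bool) : M :=
  (List.ofFn fun j => if ε j then f j else 1).reverse.prod

section selectedProd

variable {M : Type*} [Monoid M]

@[simp]
theorem selectedProd_zero (f : Fin 0 → M) (ε : Fin 0 → Bool) : selectedProd f ε = 1 := rfl

theorem selectedProd_snoc {n : ℕ} (f : Fin (n + 1) → M) (ε : Fin n → Bool) (b : Bool) :
    selectedProd f (Fin.snoc ε b) =
      (if b then f (Fin.last n) else 1) * selectedProd (Fin.init f) ε := by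
  rw [selectedProd, selectedProd, List.ofFn_succ', List.concat_eq_append, List.reverse_append]
  simp [Fin.init]

theorem selectedProd_mem {S : Type*} [SetLike S M] [SubmonoidClass S M] {s : S} {n : ℕ}
    {f : Fin n → M} (hf : ∀ j, f j ∈ s) (ε : Fin n → Bool) : selectedProd f ε ∈ s :=
  list_prod_mem <| by
    simp only [List.mem_reverse, List.mem_ofFn]
    rintro _ ⟨j, rfl⟩
    split
    exacts [hf j, one_mem s]

end selectedProd

theorem eq_zero_of_sum_selectedProd_mul_eq_zero {R : Type*} [Semiring R] {n : ℕ}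
    (ψ : Fin n → R) (𝒜 : Fin n → Subsemiring R) (hψ : ∀ i j, i < j → ψ i ∈ 𝒜 j)
    (hcancel : ∀ j, ∀ B ∈ 𝒜 j, ∀ B' ∈ 𝒜 j, ψ j * B + B' = 0 → B = 0)
    (A : (Fin n → Bool) → R) (hA : ∀ ε j, A ε ∈ 𝒜 j)
    (hsum : ∑ ε, selectedProd ψ ε * A ε = 0) (ε : Fin n → Bool) : A ε = 0 := by
  induction n with
  | zero => simpa [Unique.eq_default ε] using hsum
  | succ n ih =>
    set B : Bool → R := fun b => ∑ δ, selectedProd (Fin.init ψ) δ * A (Fin.snoc δ b)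
    have hB : ∀ b, B b ∈ 𝒜 (Fin.last n) := fun b =>
      sum_mem fun δ _ => mul_mem
        (selectedProd_mem (fun j => hψ _ _ (Fin.castSucc_lt_last j)) δ) (hA _ _)
    have hsplit : ψ (Fin.last n) * B true + B false = 0 := by
      rw [← hsum, ← (Fin.snocEquiv fun _ => Bool).sum_comp, Fintype.sum_prod_type,
        Fintype.sum_bool]
      simp [B, Fin.snocEquiv, selectedProd_snoc, Finset.mul_sum, mul_assoc]
    have htrue : B true = 0 := hcancel _ _ (hB true) _ (hB false) hsplit
    have hfalse : B false = 0 := by simpa [htrue] using hsplit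
    have hinit : ∀ b δ, A (Fin.snoc δ b) = 0 := fun b =>
      ih (Fin.init ψ) (Fin.init 𝒜) (fun i j hij => hψ _ _ (Fin.castSucc_lt_castSucc_iff.mpr hij))
        (fun j => hcancel j.castSucc) (fun δ => A (Fin.snoc δ b)) (fun δ j => hA _ _)
        (by cases b <;> assumption)
    simpa using hinit (ε (Fin.last n)) (Fin.init ε)

theorem linearIndependent_selectedProd_mul {K R ι : Type*} [CommRing K] [Ring R] [Algebra K R]
    [Fintype ι] {n : ℕ} (ψ : Fin n → R) (𝒜 : Fin n → Subalgebra K R)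
    (hψ : ∀ i j, i < j → ψ i ∈ 𝒜 j)
    (hcancel : ∀ j, ∀ B ∈ 𝒜 j, ∀ B' ∈ 𝒜 j, ψ j * B + B' = 0 → B = 0)
    {Ω : ι → R} (hΩ : LinearIndependent K Ω) (hΩ𝒜 : ∀ i j, Ω i ∈ 𝒜 j) :
    LinearIndependent K fun x : ι × (Fin n → Bool) => selectedProd ψ x.2 * Ω x.1 := by
  rw [Fintype.linearIndependent_iff] at hΩ ⊢
  intro g hg x
  have hA : ∀ ε, ∑ i, g (i, ε) • Ω i = 0 :=
    eq_zero_of_sum_selectedProd_mul_eq_zero ψ (fun j => (𝒜 j).toSubsemiring) hψ hcancel _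
      (fun ε j => sum_mem fun i _ => (𝒜 j).smul_mem (hΩ𝒜 i j) _) <| by
        simpa [Finset.mul_sum, Fintype.sum_prod_type_right] using hg
  exact hΩ (fun i => g (i, x.2)) (hA x.2) x.1

namespace Submodule

section Semiring

variable {R M : Type*} [CommSemiring R] [AddCommMonoid M] [Module R M]

def endStabilizer (p : Submodule R M) : Subalgebra R (Module.End R M) where
  carrier := {f | p ∈ f.invtSubmodule}
  mul_mem' hf hg _ hx := hf (hg hx)
  add_mem' hf hg := Module.End.invtSubmodule_inf_invtSubmodule_le_invtSubmodule_add _ _ ⟨hf, hg⟩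
  algebraMap_mem' c _ hx := p.smul_mem c hx

theorem mem_endStabilizer_of_map_eq {p : Submodule R M} {f : Module.End R M} (h : p.map f = p) :
    f ∈ p.endStabilizer :=
  (Module.End.mem_invtSubmodule_iff_map_le f).2 h.le

end Semiring

variable {R M : Type*} [CommRing R] [AddCommGroup M] [Module R M]

theorem eq_zero_of_mem_of_apply_mem {W : Submodule R M} {f : Module.End R M}
    (hf : Function.Injective f) (hW : W.map f ⊓ W = ⊥) {x : M} (hx : x ∈ W) (hfx : f x ∈ W) :
    x = 0 :=
  hf <| by
    rw [map_zero, ← mem_bot R, ← hW]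
    exact ⟨mem_map_of_mem hx, hfx⟩

theorem map_comp_inf_eq_bot {W : Submodule R M} {a b : Module.End R M}
    (hb : Function.Injective b) (hbW : W.map b = W) (haW : W.map a ⊓ W = ⊥) :
    W.map (b ∘ₗ a) ⊓ W = ⊥ :=
  calc W.map (b ∘ₗ a) ⊓ W = (W.map a).map b ⊓ W.map b := by rw [map_comp, hbW]
    _ = (W.map a ⊓ W).map b := (map_inf b hb).symm
    _ = ⊥ := by rw [haW, map_bot]

end Submodule

section Cancellation

variable {R M : Type*} [CommRing R] [AddCommGroup M] [Module R M]

theorem eq_zero_of_mul_add_eq_zero {T U : Submodule R M} (hTU : T ⊔ U = ⊤)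
    {ψ : Module.End R M} (hψ : Function.Injective ψ)
    (hT : T.map ψ ⊓ T = ⊥) (hU : U.map ψ ⊓ U = ⊥) {B B' : Module.End R M}
    (hB : B ∈ T.endStabilizer ⊓ U.endStabilizer) (hB' : B' ∈ T.endStabilizer ⊓ U.endStabilizer)
    (h : ψ * B + B' = 0) : B = 0 := by
  have hψB : ∀ x, ψ (B x) = -B' x := fun x => eq_neg_of_add_eq_zero_left congr($h x)
  have hker : ∀ W : Submodule R M, W.map ψ ⊓ W = ⊥ → B ∈ W.endStabilizer →
      B' ∈ W.endStabilizer → W ≤ LinearMap.ker B := fun W hW hBW hB'W x hx =>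
    W.eq_zero_of_mem_of_apply_mem hψ hW (hBW hx) (hψB x ▸ W.neg_mem (hB'W hx))
  rw [← LinearMap.ker_eq_top, eq_top_iff, ← hTU]
  exact sup_le (hker T hT hB.1 hB'.1) (hker U hU hB.2 hB'.2)

theorem eq_zero_of_mul_mul_add_eq_zero {T U : Submodule R M} (hTU : T ⊔ U = ⊤)
    {α β : M ≃ₗ[R] M} (hβT : T.map (β : Module.End R M) = T)
    (hαU : U.map (α : Module.End R M) = U) (hαT : T.map (α : Module.End R M) ⊓ T = ⊥)
    (hβU : U.map (β : Module.End R M) ⊓ U = ⊥) {B B' : Module.End R M}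
    (hB : B ∈ T.endStabilizer ⊓ U.endStabilizer) (hB' : B' ∈ T.endStabilizer ⊓ U.endStabilizer)
    (h : (β : Module.End R M) * α * B + B' = 0) : B = 0 := by
  refine eq_zero_of_mul_add_eq_zero (ψ := (β : Module.End R M) * α) hTU
    (β.injective.comp α.injective) (Submodule.map_comp_inf_eq_bot β.injective hβT hαT) ?_ hB hB' h
  rwa [Module.End.mul_eq_comp, Submodule.map_comp, hαU]

end Cancellation

/-- Under the (r = 2) subspace conditions, with `2n ≤ k`,
`S_{2j−1} ∩ S_{2j} = {0}` for `j = 1,…,n`, and linearly independent endomorphisms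
`Ω₁, …, Ω_m` satisfying `Ω_i(S_j) = S_j` for all `j ∈ {1,…,2n}`, the `m·2ⁿ`
compositions `Υ^i_ε = Ω_i · ∏_{j=1}^n (Φ_{2j−1}Φ_{2j})^{ε_j}` (`Ω_i` applied first,
then the selected pairs in increasing `j`) are linearly independent. -/
theorem stmt16 (F : Type*) [Field F] (V : Type*) [AddCommGroup V] [Module F V]
    [FiniteDimensional F V] (ℓ : ℕ) (hℓeven : Even ℓ)
    (hdim : Module.finrank F V = ℓ)
    (k : ℕ) (Φ : Fin k → V ≃ₗ[F] V) (S : Fin k → Submodule F V)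
    (hSdim : ∀ i, Module.finrank F (S i) = ℓ / 2)
    (h1 : ∀ i j : Fin k, i ≠ j → (S i).map (Φ j : V →ₗ[F] V) = S i)
    (h2 : ∀ i : Fin k, (S i).map (Φ i : V →ₗ[F] V) ⊓ S i = ⊥)
    (n : ℕ) (hn : 2 * n ≤ k)
    (hdisj : ∀ j : Fin n,
      S ⟨2 * j.val, by omega⟩ ⊓ S ⟨2 * j.val + 1, by omega⟩ = ⊥)
    (m : ℕ) (Ω : Fin m → Module.End F V)
    (hΩind : LinearIndependent F Ω)
    (hΩS : ∀ (i : Fin m) (j : Fin k), j.val < 2 * n → (S j).map (Ω i) = S j)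
    (Υ : Fin m → (Fin n → Bool) → Module.End F V)
    (hΥ : ∀ (i : Fin m) (ε : Fin n → Bool), Υ i ε =
      (List.ofFn (fun j : Fin n =>
        if ε j then
          ((Φ ⟨2 * j.val + 1, by omega⟩ : V →ₗ[F] V)) ∘ₗ
            ((Φ ⟨2 * j.val, by omega⟩ : V →ₗ[F] V))
        else (1 : Module.End F V))).reverse.prod * Ω i) :
    LinearIndependent F (fun x : Fin m × (Fin n → Bool) => Υ x.1 x.2) := by
  let a (j : Fin n) : Fin k := ⟨2 * j, by omega⟩
  let b (j : Fin n) : Fin k := ⟨2 * j + 1, by omega⟩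
  let φ (c : Fin k) : Module.End F V := Φ c
  let 𝒜 (j : Fin n) := (S (a j)).endStabilizer ⊓ (S (b j)).endStabilizer
  have hφ : ∀ c j, c ≠ a j → c ≠ b j → φ c ∈ 𝒜 j := fun c j ha hb =>
    ⟨Submodule.mem_endStabilizer_of_map_eq (h1 _ _ ha.symm),
      Submodule.mem_endStabilizer_of_map_eq (h1 _ _ hb.symm)⟩
  have hψ : ∀ i j, i < j → φ (b i) * φ (a i) ∈ 𝒜 j := fun i j hij => by
    refine mul_mem (hφ _ _ ?_ ?_) (hφ _ _ ?_ ?_) <;>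
      simp only [a, b, ne_eq, Fin.mk.injEq] <;> omega
  have hcancel : ∀ j, ∀ B ∈ 𝒜 j, ∀ B' ∈ 𝒜 j, φ (b j) * φ (a j) * B + B' = 0 → B = 0 := by
    intro j B hB B' hB'
    have hab : a j ≠ b j := Fin.ne_of_val_ne (by simp [a, b])
    have hfinrank : Module.finrank F V ≤
        Module.finrank F (S (a j)) + Module.finrank F (S (b j)) := by
      obtain ⟨r, rfl⟩ := hℓeven
      rw [hdim, hSdim, hSdim]
      omega
    exact eq_zero_of_mul_mul_add_eq_zero
      (Submodule.eq_top_of_disjoint _ _ hfinrank (disjoint_iff.2 (hdisj j)))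
      (h1 _ _ hab) (h1 _ _ hab.symm) (h2 _) (h2 _) hB hB'
  have hΩ𝒜 : ∀ i j, Ω i ∈ 𝒜 j := fun i j =>
    ⟨Submodule.mem_endStabilizer_of_map_eq (hΩS _ _ (by simp only [a]; omega)),
      Submodule.mem_endStabilizer_of_map_eq (hΩS _ _ (by simp only [b]; omega))⟩
  simp only [hΥ]
  exact linearIndependent_selectedProd_mul _ 𝒜 hψ hcancel hΩind hΩ𝒜
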